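/- Let h be the 5-dimensional Lie algebra with nonzero brackets [e2,e3]=e1, [e2,e5]=e3, [e3,e5]=-e2, [e4,e5]=e1. Then h is solvable, non-nilpotent, and of type I: for every X ∈ h all complex eigenvalues of ad_X are purely imaginary, but there exists X with ad_X not nilpotent. -/

import Mathlib

/-- The bracket of the 5-dimensional Lie algebra `h` with basis `e1,…,e5` (indices
`0,…,4`) and nonzero brackets `[e2,e3]=e1`, `[e2,e5]=e3`, `[e3,e5]=-e2`, `[e4,e5]=e1`. -/
def hBracket (X Y : Fin 5 → ℝ) : Fin 5 → ℝ :=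
  ![X 1 * Y 2 - X 2 * Y 1 + X 3 * Y 4 - X 4 * Y 3,
    -(X 2 * Y 4 - X 4 * Y 2),
    X 1 * Y 4 - X 4 * Y 1,
    0,
    0]

/-- The derived series of a bracket on a real vector space. -/
def derSeries {V : Type*} [AddCommGroup V] [Module ℝ V] (br : V → V → V) : ℕ → Submodule ℝ V
  | 0 => ⊤
  | n + 1 => Submodule.span ℝ
      {z | ∃ x ∈ derSeries br n, ∃ y ∈ derSeries br n, z = br x y}

/-- The matrix of `ad_X` in the standard basis. -/
noncomputable def hAd (X : Fin 5 → ℝ) : Matrix (Fin 5) (Fin 5) ℝ :=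
  Matrix.of fun i j => hBracket X (Pi.single j 1) i

/-!
The derived series is `h ⊇ span{e₁,e₂,e₃} ⊇ span{e₁} ⊇ 0`. The characteristic polynomial of the
complexified `ad_X` is `t³ (t² + x₅²)`, so its roots are `0` and `±i x₅`. For `X = e₅` the root `i`
is nonzero, whereas a nilpotent matrix has characteristic polynomial `tⁿ`.
-/

theorem derSeries_succ_le {V : Type*} [AddCommGroup V] [Module ℝ V] {br : V → V → V} {n : ℕ}
    {S : Submodule ℝ V} (h : ∀ x ∈ derSeries br n, ∀ y ∈ derSeries br n, br x y ∈ S) :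
    derSeries br (n + 1) ≤ S :=
  Submodule.span_le.2 fun _ ⟨x, hx, y, hy, hz⟩ => hz ▸ h x hx y hy

theorem derSeries_hBracket_one_le : derSeries hBracket 1 ≤ Submodule.pi {3, 4} fun _ => ⊥ :=
  derSeries_succ_le fun x _ y _ => by simp [Submodule.mem_pi, hBracket]

theorem derSeries_hBracket_two_le : derSeries hBracket 2 ≤ Submodule.pi {1, 2, 3, 4} fun _ => ⊥ :=
  derSeries_succ_le fun x hx y hy => by
    have hx4 : x 4 = 0 := by simpa using derSeries_hBracket_one_le hx 4
    have hy4 : y 4 = 0 := by simpa using derSeries_hBracket_one_le hy 4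
    simp [Submodule.mem_pi, hBracket, hx4, hy4]

theorem derSeries_hBracket_three : derSeries hBracket 3 = ⊥ :=
  le_bot_iff.1 <| derSeries_succ_le fun x hx y hy => by
    have hx' := fun i hi => derSeries_hBracket_two_le hx i hi
    have hy' := fun i hi => derSeries_hBracket_two_le hy i hi
    simp only [Set.mem_insert_iff, Set.mem_singleton_iff, Submodule.bot_coe, forall_eq_or_imp,
      forall_eq] at hx' hy'
    simp [Submodule.mem_bot, funext_iff, Fin.forall_fin_succ, hBracket, hx', hy']

theorem Matrix.eq_zero_of_isNilpotent_of_isRoot_charpoly {n R : Type*} [Fintype n] [DecidableEq n]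
    [CommRing R] [IsDomain R] {M : Matrix n n R} (hM : IsNilpotent M) {c : R}
    (hc : M.charpoly.IsRoot c) : c = 0 := by
  have hχ : M.charpoly = Polynomial.X ^ Fintype.card n :=
    sub_eq_zero.1 (isNilpotent_charpoly_sub_pow_of_isNilpotent hM).eq_zero
  rw [hχ] at hc
  exact eq_zero_of_pow_eq_zero (by simpa using hc)

theorem Complex.re_eq_zero_of_sq_add_ofReal_sq_eq_zero {c : ℂ} {r : ℝ}
    (h : c ^ 2 + (r : ℂ) ^ 2 = 0) : c.re = 0 := by
  have hre : c.re ^ 2 - c.im ^ 2 + r ^ 2 = 0 := by simpa [sq] using congrArg Complex.re h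
  have him : c.re * c.im = 0 := by
    have := congrArg Complex.im h
    simp only [sq, Complex.add_im, Complex.mul_im, ← Complex.ofReal_mul, Complex.ofReal_im,
      Complex.zero_im] at this
    linarith
  rcases mul_eq_zero.1 him with hre0 | him0
  · exact hre0
  · nlinarith [sq_nonneg r]

theorem hAd_eq (X : Fin 5 → ℝ) : hAd X =
    !![0, -X 2, X 1, -X 4, X 3;
       0, 0, X 4, 0, -X 2;
       0, -X 4, 0, 0, X 1;
       0, 0, 0, 0, 0;
       0, 0, 0, 0, 0] := by
  ext i j
  fin_cases i <;> fin_cases j <;>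
    simp [hAd, hBracket, Pi.single_apply]

theorem eval_charpoly_hAd_map_ofReal (X : Fin 5 → ℝ) (c : ℂ) :
    ((hAd X).map Complex.ofReal).charpoly.eval c = c ^ 3 * (c ^ 2 + (X 4 : ℂ) ^ 2) := by
  rw [Matrix.eval_charpoly]
  have hcharmatrix : Matrix.scalar (Fin 5) c - (hAd X).map Complex.ofReal =
      !![c, (X 2:ℂ), -(X 1:ℂ), (X 4:ℂ), -(X 3:ℂ);
         0, c, -(X 4:ℂ), 0, (X 2:ℂ);
         0, (X 4:ℂ), c, 0, -(X 1:ℂ);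
         0, 0, 0, c, 0;
         0, 0, 0, 0, c] := by
    ext i j
    fin_cases i <;> fin_cases j <;> simp [hAd_eq]
  rw [hcharmatrix]
  simp [Matrix.det_succ_column_zero, Fin.sum_univ_succ, Fin.succAbove]
  ring

/-- `h` is solvable, of type I (every complex eigenvalue of every `ad_X` is purely
imaginary), but non-nilpotent: there exists `X` with `ad_X` not nilpotent. -/
theorem h_solvable_typeI_not_nilpotent :
    (∃ n : ℕ, derSeries hBracket n = ⊥) ∧
    (∀ X : Fin 5 → ℝ, ∀ c : ℂ,
      c ∈ ((hAd X).map Complex.ofReal).charpoly.roots → c.re = 0) ∧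
    (∃ X : Fin 5 → ℝ, ¬ IsNilpotent (hAd X)) := by
  refine ⟨⟨3, derSeries_hBracket_three⟩, fun X c hc => ?_, ⟨Pi.single 4 1, fun hnil => ?_⟩⟩
  · have hroot := (Polynomial.mem_roots'.1 hc).2
    rw [Polynomial.IsRoot, eval_charpoly_hAd_map_ofReal] at hroot
    rcases mul_eq_zero.1 hroot with hc3 | hsq
    · simp [eq_zero_of_pow_eq_zero hc3]
    · exact Complex.re_eq_zero_of_sq_add_ofReal_sq_eq_zero hsq
  · have hI : ((hAd (Pi.single 4 1)).map Complex.ofReal).charpoly.IsRoot Complex.I := by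
      simp [Polynomial.IsRoot, eval_charpoly_hAd_map_ofReal]
    exact Complex.I_ne_zero <| Matrix.eq_zero_of_isNilpotent_of_isRoot_charpoly
      (hnil.map Complex.ofRealHom.mapMatrix) hI
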